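/- arXiv:1902.07348 — 2 statements merged into one kernel-verified Lean document; each statement's English description precedes it below -/
import Mathlib

section
/- Under the change of variables u = r^{(n-1)/2} z, the operator K[z] = z'' + (n-1)(r'/r) z' - (α/r²) z transforms as K[z] = r^{-(n-1)/2} ( u'' + ( (1/4)λ²(n-1)(n-3) + (1/2)λμ(n-1) - (4α + (n-3)(n-1))/(4r²) + (1/4)(n-1)² ) u ), for any smooth z, where r satisfies r'' + r + rλμ = 0, (r')² + r²(1+λ²) = 1, λ = H + c^{-n/2} r^{-n}, μ = H - (n-1)c^{-n/2} r^{-n}. -/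
private lemma liouville_alg (p a R l m Z Z' Z'' R1 R2 A : ℝ) (hR : R ≠ 0) (hA : A ≠ 0)
    (o1 : R1^2 + R^2*(1+l^2) = 1) (o2 : R2 + R + R*l*m = 0) :
    Z'' + 2*p*(R1/R)*Z' - (a/R^2)*Z
      = A⁻¹ * ((R2*p*(A/R) + R1*p*(R1*(p-1)*(A/R^2)))*Z + R1*p*(A/R)*Z' + (R1*p*(A/R)*Z' + A*Z'')
        + ((1/4)*l^2*((2*p)*(2*p-2)) + (1/2)*l*m*(2*p) - (4*a + (2*p-2)*(2*p))/(4*R^2) + (1/4)*(2*p)^2) * (A*Z)) := by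
  field_simp
  linear_combination (-(4*R*p*Z)) * o2 + (-(4*p*(p-1)*Z)) * o1


/-- Liouville transformation `u = r^{(n-1)/2} z` for the radial part of the
Laplacian on a rotational CMC hypersurface of the sphere. -/
theorem stmt_1 (n : ℕ) (hn : 2 ≤ n) (α H c : ℝ) (hc : 0 < c)
    (r : ℝ → ℝ) (hr : ContDiff ℝ (⊤ : ℕ∞) r) (hrpos : ∀ t, 0 < r t)
    (lam mu : ℝ → ℝ)
    (hlam : ∀ t, lam t = H + c ^ (-(n : ℝ) / 2) * (r t) ^ (-(n : ℝ)))
    (hmu : ∀ t, mu t = H - ((n : ℝ) - 1) * c ^ (-(n : ℝ) / 2) * (r t) ^ (-(n : ℝ)))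
    (hode1 : ∀ t, (deriv r t) ^ 2 + (r t) ^ 2 * (1 + (lam t) ^ 2) = 1)
    (hode2 : ∀ t, deriv (deriv r) t + r t + r t * lam t * mu t = 0)
    (z : ℝ → ℝ) (hz : ContDiff ℝ (⊤ : ℕ∞) z)
    (u : ℝ → ℝ) (hu : ∀ t, u t = (r t) ^ (((n : ℝ) - 1) / 2) * z t) :
    ∀ t, deriv (deriv z) t + ((n : ℝ) - 1) * (deriv r t / r t) * deriv z t
        - (α / (r t) ^ 2) * z t
      = (r t) ^ (-(((n : ℝ) - 1) / 2)) *
        (deriv (deriv u) t +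
          ((1 / 4) * (lam t) ^ 2 * (((n : ℝ) - 1) * ((n : ℝ) - 3))
            + (1 / 2) * lam t * mu t * ((n : ℝ) - 1)
            - (4 * α + ((n : ℝ) - 3) * ((n : ℝ) - 1)) / (4 * (r t) ^ 2)
            + (1 / 4) * ((n : ℝ) - 1) ^ 2) * u t) := by
  intro t
  set p : ℝ := ((n : ℝ) - 1) / 2 with hp
  have hrd : Differentiable ℝ r := hr.differentiable (by simp)
  have hr' : ContDiff ℝ ((⊤:ℕ∞) : WithTop ℕ∞) (deriv r) := (contDiff_infty_iff_deriv.mp (hr.of_le (by simp))).2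
  have hrd' : Differentiable ℝ (deriv r) := hr'.differentiable (by simp)
  have hzd : Differentiable ℝ z := hz.differentiable (by simp)
  have hz' : ContDiff ℝ ((⊤:ℕ∞) : WithTop ℕ∞) (deriv z) := (contDiff_infty_iff_deriv.mp (hz.of_le (by simp))).2
  have hzd' : Differentiable ℝ (deriv z) := hz'.differentiable (by simp)
  have hU : ∀ s, HasDerivAt u
      (deriv r s * p * r s ^ (p - 1) * z s + r s ^ p * deriv z s) s := by
    intro s
    have h1 : HasDerivAt (fun x => r x ^ p) (deriv r s * p * r s ^ (p - 1)) s :=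
      (hrd s).hasDerivAt.rpow_const (Or.inl (hrpos s).ne')
    have h2 := h1.mul (hzd s).hasDerivAt
    have he : u = fun x => r x ^ p * z x := funext hu
    rw [he]
    exact h2
  have hU1 : deriv u = fun s =>
      deriv r s * p * r s ^ (p - 1) * z s + r s ^ p * deriv z s :=
    funext fun s => (hU s).deriv
  -- second derivative
  have h1 : HasDerivAt (fun x => r x ^ (p - 1)) (deriv r t * (p - 1) * r t ^ (p - 1 - 1)) t :=
    (hrd t).hasDerivAt.rpow_const (Or.inl (hrpos t).ne')
  have h2 : HasDerivAt (fun x => r x ^ p) (deriv r t * p * r t ^ (p - 1)) t :=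
    (hrd t).hasDerivAt.rpow_const (Or.inl (hrpos t).ne')
  have g1 : HasDerivAt (fun s => deriv r s * p * r s ^ (p - 1))
      (deriv (deriv r) t * p * r t ^ (p - 1)
        + deriv r t * p * (deriv r t * (p - 1) * r t ^ (p - 1 - 1))) t := by
    exact ((hrd' t).hasDerivAt.mul_const p).mul h1
  have g3 : HasDerivAt (fun s => deriv r s * p * r s ^ (p - 1) * z s)
      ((deriv (deriv r) t * p * r t ^ (p - 1)
        + deriv r t * p * (deriv r t * (p - 1) * r t ^ (p - 1 - 1))) * z t
        + deriv r t * p * r t ^ (p - 1) * deriv z t) t := g1.mul (hzd t).hasDerivAt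
  have g4 : HasDerivAt (fun s => r s ^ p * deriv z s)
      (deriv r t * p * r t ^ (p - 1) * deriv z t + r t ^ p * deriv (deriv z) t) t :=
    h2.mul (hzd' t).hasDerivAt
  have hU2 : deriv (deriv u) t =
      (deriv (deriv r) t * p * r t ^ (p - 1)
        + deriv r t * p * (deriv r t * (p - 1) * r t ^ (p - 1 - 1))) * z t
        + deriv r t * p * r t ^ (p - 1) * deriv z t
        + (deriv r t * p * r t ^ (p - 1) * deriv z t + r t ^ p * deriv (deriv z) t) := by
    rw [hU1]
    exact (g3.add g4).deriv
  have hR : (0:ℝ) < r t := hrpos t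
  have hA : (0:ℝ) < r t ^ p := Real.rpow_pos_of_pos hR p
  have e1 : r t ^ (p - 1) = r t ^ p / r t := by
    rw [Real.rpow_sub hR, Real.rpow_one]
  have e2 : r t ^ (p - 1 - 1) = r t ^ p / (r t ^ 2) := by
    rw [show p - 1 - 1 = p - 2 by ring, Real.rpow_sub hR]
    congr 1
    rw [show (2:ℝ) = ((2:ℕ):ℝ) by norm_num, Real.rpow_natCast]
  have e3 : r t ^ (-p) = (r t ^ p)⁻¹ := Real.rpow_neg hR.le p
  rw [hU2, hu t, e3, e1, e2]
  have o1 := hode1 t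
  have o2 := hode2 t
  have key := liouville_alg p α (r t) (lam t) (mu t) (z t) (deriv z t) (deriv (deriv z) t)
    (deriv r t) (deriv (deriv r) t) (r t ^ p) hR.ne' hA.ne' o1 o2
  linear_combination key
end

section
/- For a rotational CMC hypersurface, the function r'(t) satisfies the Jacobi radial equation z'' + (n-1)(r'/r) z' + ( n + nH² + n(n-1)c^{-n} r^{-2n} ) z = 0 (i.e. K_{J,1}[r'] = 0), where r satisfies (r')² + r²(1+λ²) = 1, λ = H + c^{-n/2} r^{-n}. -/
/-- For a rotational CMC hypersurface, `r'` lies in the kernel of the radial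
Jacobi operator `K_{J,1}`. -/
theorem stmt_5 (n : ℕ) (hn : 2 ≤ n) (H c : ℝ) (hc : 0 < c)
    (r : ℝ → ℝ) (hr : ContDiff ℝ (⊤ : ℕ∞) r) (hrpos : ∀ t, 0 < r t)
    (lam : ℝ → ℝ)
    (hlam : ∀ t, lam t = H + c ^ (-(n : ℝ) / 2) * (r t) ^ (-(n : ℝ)))
    (hode : ∀ t, (deriv r t) ^ 2 + (r t) ^ 2 * (1 + (lam t) ^ 2) = 1) :
    ∀ t, deriv (deriv (deriv r)) t
        + ((n : ℝ) - 1) * (deriv r t / r t) * deriv (deriv r) t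
        + ((n : ℝ) + (n : ℝ) * H ^ 2
            + (n : ℝ) * ((n : ℝ) - 1) * c ^ (-(n : ℝ)) * (r t) ^ (-(2 * n : ℝ)))
          * deriv r t = 0 := by
  -- differentiability facts
  have hr' : ContDiff ℝ (⊤ : ℕ∞) r := hr.of_le (by simp)
  have hd1 : Differentiable ℝ r := hr'.differentiable (by simp)
  have hcd2 : ContDiff ℝ (⊤ : ℕ∞) (deriv r) := (contDiff_infty_iff_deriv.mp hr').2
  have hd2 : Differentiable ℝ (deriv r) := hcd2.differentiable (by simp)
  have hcd3 : ContDiff ℝ (⊤ : ℕ∞) (deriv (deriv r)) := (contDiff_infty_iff_deriv.mp hcd2).2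
  have hd3 : Differentiable ℝ (deriv (deriv r)) := hcd3.differentiable (by simp)
  have hcd4 : ContDiff ℝ (⊤ : ℕ∞) (deriv (deriv (deriv r))) := (contDiff_infty_iff_deriv.mp hcd3).2
  have hrne : ∀ t, r t ≠ 0 := fun t => (hrpos t).ne'
  set C := c ^ (-(n:ℝ)/2) with hCdef
  have hC2 : C ^ 2 = (c ^ n)⁻¹ := by
    rw [hCdef, ← Real.rpow_natCast (c ^ (-(n:ℝ)/2)) 2, ← Real.rpow_mul hc.le,
      ← Real.rpow_natCast c n, ← Real.rpow_neg hc.le]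
    norm_num
  have hlam2 : ∀ t, lam t = H + C * ((r t) ^ n)⁻¹ := by
    intro t
    rw [hlam t, Real.rpow_neg (hrpos t).le, Real.rpow_natCast]
  have hlamH : ∀ t, lam t - H = C * ((r t) ^ n)⁻¹ := fun t => by rw [hlam2 t]; ring
  -- coefficient rewriting
  have hcoef : ∀ t, c ^ (-(n:ℝ)) * (r t) ^ (-(2 * n : ℝ)) = (lam t - H) ^ 2 := by
    intro t
    have h1 : c ^ (-(n:ℝ)) = (c ^ n)⁻¹ := by
      rw [← Real.rpow_natCast c n, ← Real.rpow_neg hc.le]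
    have h2 : (r t) ^ (-(2 * n : ℝ)) = ((r t) ^ (2 * n))⁻¹ := by
      rw [← Real.rpow_natCast (r t) (2 * n), ← Real.rpow_neg (hrpos t).le]
      norm_num
    rw [h1, h2, hlamH t, mul_pow, hC2, inv_pow, ← pow_mul]
    ring_nf
  -- derivative of lam
  have hlamderiv : ∀ t, HasDerivAt lam (-(n:ℝ) * (lam t - H) * deriv r t / r t) t := by
    intro t
    have h1 := ((((hd1 t).hasDerivAt).fun_pow n).fun_inv (pow_ne_zero n (hrne t))).const_mul C
    have h2 := h1.const_add H
    have heq : lam = fun s => H + C * ((r s)^n)⁻¹ := funext hlam2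
    rw [heq]
    refine h2.congr_deriv ?_
    have e1 : (r t ^ n)^2 = r t ^ (n-1) * (r t ^ n * r t) := by
      rw [← pow_mul, ← pow_succ, ← pow_add]
      congr 1
      omega
    rw [e1, show -((n:ℝ) * r t ^ (n-1) * deriv r t) = r t ^(n-1) * (-((n:ℝ) * deriv r t)) from by
      ring, mul_div_mul_left _ _ (pow_ne_zero _ (hrne t))]
    simp only [add_sub_cancel_left]
    field_simp
  -- differentiate the ODE
  have key : ∀ t, deriv r t * (deriv (deriv r) t + r t * (1 + lam t ^ 2)
      - (n:ℝ) * lam t * (lam t - H) * r t) = 0 := by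
    intro t
    have h1 := (((hd2 t).hasDerivAt).fun_pow 2).fun_add
      ((((hd1 t).hasDerivAt).fun_pow 2).fun_mul (((hlamderiv t).fun_pow 2).const_add 1))
    have h2 : (fun s => deriv r s ^ 2 + r s ^ 2 * (1 + lam s ^ 2)) = fun _ => (1:ℝ) :=
      funext hode
    rw [h2] at h1
    have h0 := (hasDerivAt_const t (1:ℝ)).unique h1
    have hrt := hrne t
    field_simp at h0
    have h5 : r t * (deriv r t * (deriv (deriv r) t + r t * (1 + lam t ^ 2)
        - (n:ℝ) * lam t * (lam t - H) * r t)) = 0 := by linear_combination (-(1/2 : ℝ) * r t) * h0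
    exact (mul_eq_zero.mp h5).resolve_left hrt
  -- the open set where r' ≠ 0
  set U : Set ℝ := {t | deriv r t ≠ 0} with hUdef
  have hUopen : IsOpen U := isOpen_compl_singleton.preimage hcd2.continuous
  set G : ℝ → ℝ := fun t => r t * ((n:ℝ) * lam t * (lam t - H) - 1 - lam t ^ 2) with hGdef
  have hGU : ∀ t ∈ U, deriv (deriv r) t = G t := by
    intro t ht
    have hk := key t
    have ht' : deriv r t ≠ 0 := ht
    have := (mul_eq_zero.mp hk).resolve_left ht'
    simp only [hGdef]
    linarith [this]
  -- derivative of G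
  have hGderiv : ∀ t, HasDerivAt G
      (deriv r t * ((n:ℝ) * lam t * (lam t - H) - 1 - lam t ^ 2)
        + r t * ((n:ℝ) * (-(n:ℝ) * (lam t - H) * deriv r t / r t) * (lam t - H)
          + (n:ℝ) * lam t * (-(n:ℝ) * (lam t - H) * deriv r t / r t)
          - 2 * lam t * (-(n:ℝ) * (lam t - H) * deriv r t / r t))) t := by
    intro t
    have hl := hlamderiv t
    have h1 : HasDerivAt (fun s => (n:ℝ) * lam s * (lam s - H) - 1 - lam s ^ 2)
        ((n:ℝ) * (-(n:ℝ) * (lam t - H) * deriv r t / r t) * (lam t - H)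
          + (n:ℝ) * lam t * (-(n:ℝ) * (lam t - H) * deriv r t / r t)
          - 2 * lam t * (-(n:ℝ) * (lam t - H) * deriv r t / r t)) t := by
      have ha := (hl.const_mul (n:ℝ)).fun_mul (hl.sub_const H)
      have hb := (ha.sub_const 1).fun_sub (hl.fun_pow 2)
      refine hb.congr_deriv ?_
      ring
    have h2 := ((hd1 t).hasDerivAt).mul h1
    exact h2
  -- main identity on U
  have hmain : ∀ t, t ∈ U →
      deriv (deriv (deriv r)) t
        + ((n : ℝ) - 1) * (deriv r t / r t) * deriv (deriv r) t
        + ((n : ℝ) + (n : ℝ) * H ^ 2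
            + (n : ℝ) * ((n : ℝ) - 1) * (lam t - H) ^ 2) * deriv r t = 0 := by
    intro t ht
    have hev : deriv (deriv r) =ᶠ[nhds t] G :=
      Filter.eventually_of_mem (hUopen.mem_nhds ht) hGU
    have h3 : deriv (deriv (deriv r)) t =
        deriv r t * ((n:ℝ) * lam t * (lam t - H) - 1 - lam t ^ 2)
        + r t * ((n:ℝ) * (-(n:ℝ) * (lam t - H) * deriv r t / r t) * (lam t - H)
          + (n:ℝ) * lam t * (-(n:ℝ) * (lam t - H) * deriv r t / r t)
          - 2 * lam t * (-(n:ℝ) * (lam t - H) * deriv r t / r t)) := by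
      rw [hev.deriv_eq, (hGderiv t).deriv]
    have h4 : deriv (deriv r) t = G t := hGU t ht
    rw [h3, h4]
    simp only [hGdef]
    have hrt := hrne t
    have hH : lam t - (lam t - H) = H := by ring
    field_simp
    ring
  -- interior of complement
  have hint : ∀ t, t ∈ interior Uᶜ →
      deriv (deriv (deriv r)) t
        + ((n : ℝ) - 1) * (deriv r t / r t) * deriv (deriv r) t
        + ((n : ℝ) + (n : ℝ) * H ^ 2
            + (n : ℝ) * ((n : ℝ) - 1) * (lam t - H) ^ 2) * deriv r t = 0 := by
    intro t ht
    have hV : interior Uᶜ ∈ nhds t := (isOpen_interior).mem_nhds ht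
    have hr0 : ∀ s ∈ interior Uᶜ, deriv r s = 0 := by
      intro s hs
      have := interior_subset hs
      simpa [hUdef] using this
    have hev1 : deriv r =ᶠ[nhds t] (fun _ => 0) := Filter.eventually_of_mem hV hr0
    have h2' : ∀ s ∈ interior Uᶜ, deriv (deriv r) s = 0 := by
      intro s hs
      have hevs : deriv r =ᶠ[nhds s] (fun _ => 0) :=
        Filter.eventually_of_mem ((isOpen_interior).mem_nhds hs) hr0
      rw [hevs.deriv_eq]; simp
    have hev2 : deriv (deriv r) =ᶠ[nhds t] (fun _ => 0) := Filter.eventually_of_mem hV h2'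
    have h3' : deriv (deriv (deriv r)) t = 0 := by rw [hev2.deriv_eq]; simp
    have h1' : deriv r t = 0 := hr0 t ht
    have h2'' : deriv (deriv r) t = 0 := h2' t ht
    rw [h1', h2'', h3']
    ring
  -- continuity of the Jacobi expression
  set K : ℝ → ℝ := fun t => deriv (deriv (deriv r)) t
        + ((n : ℝ) - 1) * (deriv r t / r t) * deriv (deriv r) t
        + ((n : ℝ) + (n : ℝ) * H ^ 2
            + (n : ℝ) * ((n : ℝ) - 1) * (lam t - H) ^ 2) * deriv r t with hKdef
  have hlamcont : Continuous lam := by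
    have : Continuous fun s => H + C * ((r s)^n)⁻¹ := by
      fun_prop (disch := intro s; exact pow_ne_zero n (hrne s))
    rwa [funext hlam2]
  have hKcont : Continuous K := by
    apply Continuous.add
    apply Continuous.add
    · exact hcd4.continuous
    · exact (continuous_const.mul ((hcd2.continuous.div hr'.continuous hrne))).mul hcd3.continuous
    · exact (continuous_const.add (continuous_const.mul (((hlamcont.sub continuous_const).pow 2)))).mul hcd2.continuous
  have hKzero : ∀ t, K t = 0 := by
    intro t
    by_cases ht : t ∈ closure U
    · have : Set.EqOn K (fun _ => 0) (closure U) :=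
        Set.EqOn.closure (fun s hs => hmain s hs) hKcont continuous_const
      exact this ht
    · exact hint t (by rw [interior_compl]; exact ht)
  intro t
  have := hKzero t
  rw [hKdef] at this
  simp only at this
  have hco : (n:ℝ) * ((n:ℝ) - 1) * c ^ (-(n:ℝ)) * (r t) ^ (-(2 * n : ℝ))
      = (n:ℝ) * ((n:ℝ) - 1) * (lam t - H) ^ 2 := by
    rw [← hcoef t]; ring
  rw [hco]
  linarith [this]
end
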